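/- Let $P^N\to\infty$ and $d_m^N>0$ be sequences with $P^N/N\to 0$, $N^{1/3}d_m^N\to 0$, $N d_m^N\to\infty$, and $N d_m^N/|P^N|^{2/3}\to 0$. Then there is no sequence $(\lambda^N)$ of positive reals such that both (i) $\sup_N \frac{1}{N|\lambda^N|^3}\max\left(\frac{|\lambda^N|^3}{|d_m^N|^3}, P^N\right) < \infty$ and (ii) $|\lambda^N|^3/d_m^N \to 0$ hold simultaneously. -/
import Mathlib


open Filter Topology

/-- Obstruction from the second counter-example: if `P^N → ∞`, `P^N/N → 0`,
`N^{1/3} d_m^N → 0`, `N d_m^N → ∞` and `N d_m^N/(P^N)^{2/3} → 0`, then no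
sequence of scales `λ^N > 0` can satisfy simultaneously the bounded-density
condition `sup_N (1/(N(λ^N)³)) max((λ^N)³/(d_m^N)³, P^N) < ∞` and the dilution
condition `(λ^N)³/d_m^N → 0`. -/
theorem no_admissible_scale (P : ℕ → ℕ) (dm : ℕ → ℝ) (hdm : ∀ N, 0 < dm N)
    (hP : Tendsto (fun N : ℕ => (P N : ℝ)) atTop atTop)
    (h1 : Tendsto (fun N : ℕ => (P N : ℝ) / N) atTop (𝓝 0))
    (h2 : Tendsto (fun N : ℕ => (N : ℝ) ^ ((1 : ℝ) / 3) * dm N) atTop (𝓝 0))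
    (h3 : Tendsto (fun N : ℕ => (N : ℝ) * dm N) atTop atTop)
    (h4 : Tendsto (fun N : ℕ => (N : ℝ) * dm N / (P N : ℝ) ^ ((2 : ℝ) / 3)) atTop (𝓝 0)) :
    ¬ ∃ lam : ℕ → ℝ, (∀ N, 0 < lam N) ∧
        (∃ B : ℝ, ∀ N : ℕ, (1 / ((N : ℝ) * (lam N) ^ 3)) *
            max ((lam N) ^ 3 / (dm N) ^ 3) (P N : ℝ) ≤ B) ∧
        Tendsto (fun N : ℕ => (lam N) ^ 3 / dm N) atTop (𝓝 0) := by
  rintro ⟨lam, hpos, ⟨B, hB⟩, -⟩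
  have key : ∀ N : ℕ, 1 ≤ N → 1 / ((N : ℝ) * dm N ^ 3) ≤ B := by
    intro N hN
    have hlam := hpos N
    have hdmN := hdm N
    have hN0 : (0 : ℝ) < N := by exact_mod_cast hN
    have hmax : lam N ^ 3 / dm N ^ 3 ≤ max (lam N ^ 3 / dm N ^ 3) (P N : ℝ) :=
      le_max_left _ _
    have hc : (1 / ((N : ℝ) * lam N ^ 3)) * (lam N ^ 3 / dm N ^ 3) ≤ B :=
      le_trans (mul_le_mul_of_nonneg_left hmax (by positivity)) (hB N)
    have heq : (1 / ((N : ℝ) * lam N ^ 3)) * (lam N ^ 3 / dm N ^ 3)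
        = 1 / ((N : ℝ) * dm N ^ 3) := by
      field_simp
    rwa [heq] at hc
  have hBpos : 0 < B := by
    have h1' := key 1 le_rfl
    have : (0 : ℝ) < 1 / ((1 : ℕ) * dm 1 ^ 3) := by
      have := hdm 1; positivity
    calc (0 : ℝ) < 1 / ((1 : ℕ) * dm 1 ^ 3) := this
      _ ≤ B := h1'
  have hcube : Tendsto (fun N : ℕ => (N : ℝ) * dm N ^ 3) atTop (𝓝 0) := by
    have h : Tendsto (fun N : ℕ => ((N : ℝ) ^ ((1 : ℝ) / 3) * dm N) ^ 3) atTop (𝓝 0) := by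
      simpa using h2.pow 3
    refine h.congr fun N => ?_
    rw [mul_pow, ← Real.rpow_natCast ((N : ℝ) ^ ((1 : ℝ) / 3)) 3,
      ← Real.rpow_mul (Nat.cast_nonneg N)]
    norm_num
  have hev : ∀ᶠ N : ℕ in atTop, (N : ℝ) * dm N ^ 3 < 1 / B :=
    hcube.eventually_lt_const (by positivity)
  obtain ⟨N, hN1, hNsmall⟩ := ((eventually_ge_atTop 1).and hev).exists
  have hN0 : (0 : ℝ) < N := by exact_mod_cast Nat.lt_of_lt_of_le Nat.zero_lt_one hN1
  have hdmN := hdm N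
  have hprod : (0 : ℝ) < (N : ℝ) * dm N ^ 3 := by positivity
  have hlt : B < 1 / ((N : ℝ) * dm N ^ 3) := by
    rw [lt_div_iff₀ hprod]
    have ha : B * ((N : ℝ) * dm N ^ 3) < B * (1 / B) :=
      mul_lt_mul_of_pos_left hNsmall hBpos
    have hb : B * (1 / B) = 1 := by field_simp
    linarith
  exact absurd (key N hN1) (not_le.mpr hlt)
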